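/- Let γ > 0, m, n ∈ ℕ*, and for i = 1,…,m let yᵢ ∈ {+1, −1} and aᵢ ∈ ℝⁿ with ‖aᵢ‖₂ = 1. Let M₂ := [y₁a₁ ⋯ y_m a_m]ᵀ ∈ ℝ^{m×n}, 𝒜₂x := M₂x − 1_m (with 1_m the all-ones vector), and Ψ(z) := Σ_{i=1}^m max(0, −zᵢ) for z ∈ ℝᵐ. Then for every x ∈ ℝⁿ, Ψ_{γ^{-1/2}I}(𝒜₂x) = Σ_{i=1}^m (hᵢ)_{γ^{-1/2}I}(x), where hᵢ : ℝⁿ → ℝ, hᵢ(x) := max(0, 1 − yᵢ aᵢᵀ x) is the hinge loss, and for a proper lower-semicontinuous convex function f, f_{γ^{-1/2}I} := f − ⁽γ⁾f. -/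

import Mathlib

/-!
Both envelopes reduce to envelopes of `φ(s) = max(0, -s)` on `ℝ`. The penalty `‖t - z‖²` on
`ℝᵐ` splits over coordinates, so the envelope of the separable `Ψ = Σᵢ φ(zᵢ)` is the sum of the
envelopes of `φ` at the coordinates `(𝒜₂x)ᵢ`. On the other side `hᵢ = φ(⟪yᵢaᵢ, ·⟫ - 1)` with
`‖yᵢaᵢ‖ = 1`: moving `u` along `yᵢaᵢ` realises every value of the inner product at cost exactly
`(Δs)²`, and any other move costs at least as much by Cauchy–Schwarz, so the envelope of `hᵢ` at `x`
is that of `φ` at `⟪yᵢaᵢ, x⟫ - 1 = (𝒜₂x)ᵢ`.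
-/

open scoped RealInnerProductSpace
open Set

/-- The Moreau envelope `⁽γ⁾f`. -/
noncomputable def moreauEnvelope {E : Type*} [SeminormedAddCommGroup E] (γ : ℝ) (f : E → ℝ)
    (x : E) : ℝ :=
  ⨅ y, f y + ‖x - y‖ ^ 2 / (2 * γ)

theorem ciInf_pi_sum_eq_sum_ciInf {ι : Type*} [Fintype ι] {α : ι → Type*}
    [∀ i, Nonempty (α i)] (g : ∀ i, α i → ℝ) (hg : ∀ i, BddBelow (range (g i))) :
    ⨅ z : ∀ i, α i, ∑ i, g i (z i) = ∑ i, ⨅ s, g i s := by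
  apply le_antisymm
  · refine le_of_forall_pos_le_add fun ε hε => ?_
    set δ := ε / (Fintype.card ι + 1)
    have hδ : 0 < δ := by positivity
    choose z hz using fun i => exists_lt_of_ciInf_lt (lt_add_of_pos_right (⨅ s, g i s) hδ)
    have hbdd : BddBelow (range fun z : ∀ i, α i => ∑ i, g i (z i)) :=
      ⟨∑ i, (hg i).choose, by
        rintro _ ⟨z, rfl⟩; exact Finset.sum_le_sum fun i _ => (hg i).choose_spec ⟨z i, rfl⟩⟩
    calc ⨅ z : ∀ i, α i, ∑ i, g i (z i)
        ≤ ∑ i, g i (z i) := ciInf_le hbdd z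
      _ ≤ ∑ i, ((⨅ s, g i s) + δ) := Finset.sum_le_sum fun i _ => (hz i).le
      _ = (∑ i, ⨅ s, g i s) + Fintype.card ι * δ := by
          rw [Finset.sum_add_distrib, Finset.sum_const, Finset.card_univ, nsmul_eq_mul]
      _ ≤ (∑ i, ⨅ s, g i s) + ε := by
          gcongr
          rw [mul_div_assoc', div_le_iff₀ (by positivity)]
          nlinarith
  · exact le_ciInf fun z => Finset.sum_le_sum fun i _ => ciInf_le (hg i) (z i)

section MoreauEnvelope

variable {γ : ℝ}

theorem bddBelow_range_add_sq_div {E : Type*} [SeminormedAddCommGroup E] (hγ : 0 ≤ γ)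
    {f : E → ℝ} (hf : BddBelow (range f)) (x : E) :
    BddBelow (range fun y => f y + ‖x - y‖ ^ 2 / (2 * γ)) := by
  obtain ⟨b, hb⟩ := hf
  refine ⟨b, ?_⟩
  rintro _ ⟨y, rfl⟩
  have := hb ⟨y, rfl⟩
  have : 0 ≤ ‖x - y‖ ^ 2 / (2 * γ) := by positivity
  linarith

theorem moreauEnvelope_sum_coord {ι : Type*} [Fintype ι] (hγ : 0 ≤ γ) (f : ι → ℝ → ℝ)
    (hf : ∀ i, BddBelow (range (f i))) (t : EuclideanSpace ℝ ι) :
    moreauEnvelope γ (fun z => ∑ i, f i (z i)) t = ∑ i, moreauEnvelope γ (f i) (t i) := by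
  have hsplit : ∀ z : ι → ℝ, ∑ i, f i (z i) + ‖t - WithLp.toLp 2 z‖ ^ 2 / (2 * γ)
      = ∑ i, (f i (z i) + ‖t i - z i‖ ^ 2 / (2 * γ)) := fun z => by
    rw [EuclideanSpace.norm_sq_eq, Finset.sum_div, ← Finset.sum_add_distrib]
    rfl
  unfold moreauEnvelope
  rw [← (WithLp.equiv 2 (ι → ℝ)).symm.iInf_comp]
  simp only [WithLp.equiv_symm_apply, hsplit]
  exact ciInf_pi_sum_eq_sum_ciInf _ fun i => bddBelow_range_add_sq_div hγ (hf i) (t i)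

theorem moreauEnvelope_comp_inner_sub {E : Type*} [NormedAddCommGroup E] [InnerProductSpace ℝ E]
    (hγ : 0 ≤ γ) {f : ℝ → ℝ} (hf : BddBelow (range f)) {w : E} (hw : ‖w‖ = 1) (c : ℝ) (x : E) :
    moreauEnvelope γ (fun u => f (⟪w, u⟫ - c)) x = moreauEnvelope γ f (⟪w, x⟫ - c) := by
  have hww : ⟪w, w⟫ = 1 := by rw [real_inner_self_eq_norm_sq, hw, one_pow]
  have hbdd : BddBelow (range fun u => f (⟪w, u⟫ - c)) :=
    hf.mono (range_comp_subset_range _ f)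
  apply le_antisymm
  · refine le_ciInf fun s => ?_
    -- the point of the line `x + ℝ w` at which `⟪w, ·⟫ - c` takes the value `s`
    let u := x + (s - (⟪w, x⟫ - c)) • w
    have hu : ⟪w, u⟫ - c = s := by
      simp only [u, inner_add_right, real_inner_smul_right, hww]; ring
    have hxu : ‖x - u‖ = ‖(⟪w, x⟫ - c) - s‖ := by
      rw [show x - u = (⟪w, x⟫ - c - s) • w by
        rw [sub_add_eq_sub_sub, sub_self, zero_sub, ← neg_smul, neg_sub], norm_smul, hw, mul_one]
    calc moreauEnvelope γ (fun u => f (⟪w, u⟫ - c)) x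
        ≤ f (⟪w, u⟫ - c) + ‖x - u‖ ^ 2 / (2 * γ) :=
          ciInf_le (bddBelow_range_add_sq_div hγ hbdd x) u
      _ = f s + ‖(⟪w, x⟫ - c) - s‖ ^ 2 / (2 * γ) := by rw [hu, hxu]
  · refine le_ciInf fun u => ?_
    have hproj : ‖(⟪w, x⟫ - c) - (⟪w, u⟫ - c)‖ ≤ ‖x - u‖ := by
      rw [sub_sub_sub_cancel_right, ← inner_sub_right, Real.norm_eq_abs]
      simpa [hw] using abs_real_inner_le_norm w (x - u)
    calc moreauEnvelope γ f (⟪w, x⟫ - c)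
        ≤ f (⟪w, u⟫ - c) + ‖(⟪w, x⟫ - c) - (⟪w, u⟫ - c)‖ ^ 2 / (2 * γ) :=
          ciInf_le (bddBelow_range_add_sq_div hγ hf _) _
      _ ≤ f (⟪w, u⟫ - c) + ‖x - u‖ ^ 2 / (2 * γ) := by gcongr

end MoreauEnvelope

theorem me_hinge_decomposition_general (γ : ℝ) (hγ : 0 < γ) (m n : ℕ)
    (y : Fin m → ℝ) (hy : ∀ i, y i = 1 ∨ y i = -1)
    (a : Fin m → EuclideanSpace ℝ (Fin n)) (ha : ∀ i, ‖a i‖ = 1) :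
    ∀ x : EuclideanSpace ℝ (Fin n),
      ((∑ i, max 0 (-(y i * ⟪a i, x⟫ - 1))) -
          ⨅ z : EuclideanSpace ℝ (Fin m),
            ((∑ i, max 0 (-(z i))) +
              ‖(WithLp.equiv 2 (Fin m → ℝ)).symm (fun i => y i * ⟪a i, x⟫ - 1) - z‖ ^ 2 /
                (2 * γ)))
        = ∑ i,
            ((max 0 (1 - y i * ⟪a i, x⟫)) -
              ⨅ u : EuclideanSpace ℝ (Fin n),
                (max 0 (1 - y i * ⟪a i, u⟫) + ‖x - u‖ ^ 2 / (2 * γ))) := by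
  intro x
  change _ - moreauEnvelope γ (fun z : EuclideanSpace ℝ (Fin m) => ∑ i, max 0 (-(z i))) _
    = ∑ i, (_ - moreauEnvelope γ (fun u => max 0 (1 - y i * ⟪a i, u⟫)) x)
  have hφ : BddBelow (range fun s : ℝ => max 0 (-s)) :=
    ⟨0, by rintro _ ⟨s, rfl⟩; exact le_max_left _ _⟩
  have hunit : ∀ i, ‖y i • a i‖ = 1 := fun i => by
    rw [norm_smul, ha i, mul_one, Real.norm_eq_abs]
    rcases hy i with h | h <;> simp [h]
  have hinge : ∀ i, moreauEnvelope γ (fun u => max 0 (1 - y i * ⟪a i, u⟫)) x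
      = moreauEnvelope γ (fun s => max 0 (-s)) (y i * ⟪a i, x⟫ - 1) := fun i => by
    simpa only [real_inner_smul_left, neg_sub] using
      moreauEnvelope_comp_inner_sub hγ.le hφ (hunit i) 1 x
  rw [moreauEnvelope_sum_coord hγ.le _ fun _ => hφ, ← Finset.sum_sub_distrib]
  simp only [hinge, neg_sub, WithLp.equiv_symm_apply, WithLp.ofLp_toLp]

/-- Proposition 7 of the paper.  With `Ψ(z) = Σᵢ max(0, −zᵢ)`
(`= Σᵢ σ_{[-1,0]}(zᵢ)`), `M₂ = [y₁a₁ ⋯ y_m a_m]ᵀ` and `𝒜₂x = M₂x − 1_m`, the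
Moreau-enhanced function of `Ψ` evaluated at `𝒜₂x` equals the sum of the
Moreau-enhanced hinge losses `(hᵢ)_{γ^{-1/2}I}(x)`, `hᵢ(x) = max(0, 1 − yᵢaᵢᵀx)`. -/
theorem me_hinge_decomposition (γ : ℝ) (hγ : 0 < γ) (m n : ℕ) (hm : 0 < m) (hn : 0 < n)
    (y : Fin m → ℝ) (hy : ∀ i, y i = 1 ∨ y i = -1)
    (a : Fin m → EuclideanSpace ℝ (Fin n)) (ha : ∀ i, ‖a i‖ = 1) :
    ∀ x : EuclideanSpace ℝ (Fin n),
      ((∑ i, max 0 (-(y i * ⟪a i, x⟫ - 1))) -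
          ⨅ z : EuclideanSpace ℝ (Fin m),
            ((∑ i, max 0 (-(z i))) +
              ‖(WithLp.equiv 2 (Fin m → ℝ)).symm (fun i => y i * ⟪a i, x⟫ - 1) - z‖ ^ 2 /
                (2 * γ)))
        = ∑ i,
            ((max 0 (1 - y i * ⟪a i, x⟫)) -
              ⨅ u : EuclideanSpace ℝ (Fin n),
                (max 0 (1 - y i * ⟪a i, u⟫) + ‖x - u‖ ^ 2 / (2 * γ))) :=
  me_hinge_decomposition_general γ hγ m n y hy a ha
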